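/- Let L ≥ 2 and m ≥ 1 be integers. Then the transition coefficients E(m,0; a, ε, L) admit the following elementary closed forms in the three distinguished cases: E(m,0; 1/2, 1, L) = −2(m+4L−3)(L+m) / [(2L+m)(2L+m−1)(2L+m−2)] (type C); E(m,0; 1/2, 1/2, L) = −(2m+6L−5) / [(2L+m−1)(2L+m−2)] (type B); E(m,0; −1/2, 0, L) = −2/(2L+m−2) (type D). -/

import Mathlib

open Finset

/-!
The sum `S(m) = ∑_{j<m} t(m, j)` inside `E(m,0)` is a terminating balanced `₄F₃`. In each of the
three cases Zeilberger's algorithm produces a first-order recurrence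
`S(m + 1) = -G_m(0) - c(m) S(m)`: there is a rational function `G_m(j)` with
`t(m + 1, j) + c(m) t(m, j) = G_m(j + 1) - G_m(j)`, and summing over `j` telescopes because
`t(m, m) = 0` and `G_m(m + 1) = 0`. Starting from `S(1) = 1`, induction on `m` matches `S(m)`
with the closed form, and `E(m,0)` is the prefactor times `S(m)`.
-/

/-- Pochhammer symbol over `ℝ`. -/
noncomputable def pochR (x : ℝ) (n : ℕ) : ℝ := (ascPochhammer ℝ n).eval x

/-- The transition coefficient `E(m,0; a, ε, L)` for `m ≥ 1` (Theorem 5.2 of the paper):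
`E(m,0) = −[2(L+ε+m−1)(a+1)/(L(L+a)(2ε+1))]·
₄F₃[1−m, 1, a+2, 2L+2ε+m−1; L+1, L+a+1, 2ε+2 | 1]`. -/
noncomputable def Ecoef0 (a eps : ℝ) (L m : ℕ) : ℝ :=
  -(2 * ((L:ℝ) + eps + (m:ℝ) - 1) * (a + 1) / ((L:ℝ) * ((L:ℝ) + a) * (2*eps + 1))) *
    ∑ j ∈ Finset.range m,
      (pochR (1 - (m:ℝ)) j * pochR (a + 2) j * pochR (2*(L:ℝ) + 2*eps + (m:ℝ) - 1) j) /
      (pochR ((L:ℝ) + 1) j * pochR ((L:ℝ) + a + 1) j * pochR (2*eps + 2) j)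

lemma pochR_zero (x : ℝ) : pochR x 0 = 1 := by
  simp [pochR]

lemma pochR_succ (x : ℝ) (n : ℕ) : pochR x (n + 1) = pochR x n * (x + n) :=
  ascPochhammer_succ_eval n x

lemma pochR_mul_add (x : ℝ) (n : ℕ) : pochR x n * (x + n) = x * pochR (x + 1) n := by
  rw [← pochR_succ, pochR, ascPochhammer_succ_left]
  simp [pochR, Polynomial.eval_comp]

lemma pochR_one_sub_self {m : ℕ} (hm : 1 ≤ m) : pochR (1 - m) m = 0 := by
  have h : (1 - m : ℝ) = -((m - 1 : ℕ) : ℝ) := by push_cast [hm]; ring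
  rw [pochR, h, ascPochhammer_eval_neg_coe_nat_of_lt (by omega)]

noncomputable def ecoef0Term (a eps : ℝ) (L m j : ℕ) : ℝ :=
  pochR (1 - (m:ℝ)) j * pochR (a + 2) j * pochR (2*(L:ℝ) + 2*eps + (m:ℝ) - 1) j /
    (pochR ((L:ℝ) + 1) j * pochR ((L:ℝ) + a + 1) j * pochR (2*eps + 2) j)

lemma Ecoef0_eq_mul_sum (a eps : ℝ) (L m : ℕ) :
    Ecoef0 a eps L m = -(2 * ((L:ℝ) + eps + (m:ℝ) - 1) * (a + 1) /
      ((L:ℝ) * ((L:ℝ) + a) * (2*eps + 1))) * ∑ j ∈ range m, ecoef0Term a eps L m j :=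
  rfl

section ecoef0Term

variable {a eps : ℝ} {L m : ℕ}

lemma ecoef0Term_zero : ecoef0Term a eps L m 0 = 1 := by
  simp [ecoef0Term, pochR_zero]

lemma ecoef0Term_self (hm : 1 ≤ m) : ecoef0Term a eps L m m = 0 := by
  simp [ecoef0Term, pochR_one_sub_self hm]

lemma ecoef0Term_succ_right (j : ℕ) :
    ecoef0Term a eps L m (j + 1) = ecoef0Term a eps L m j *
      ((1 - m + j) * (a + 2 + j) * (2 * L + 2 * eps + m - 1 + j) /
        ((L + 1 + j) * (L + a + 1 + j) * (2 * eps + 2 + j))) := by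
  rw [ecoef0Term, ecoef0Term, div_mul_div_comm]
  simp only [pochR_succ]
  congr 1 <;> ring

lemma mul_ecoef0Term_eq_mul_ecoef0Term_succ (j : ℕ) :
    m * (2 * L + 2 * eps + m - 1 + j) * ecoef0Term a eps L m j =
      (2 * L + 2 * eps + m - 1) * (m - j) * ecoef0Term a eps L (m + 1) j := by
  have hneg := pochR_mul_add (-(m:ℝ)) j
  have htop := pochR_mul_add (2 * (L:ℝ) + 2 * eps + m - 1) j
  rw [show -(m:ℝ) + 1 = 1 - m by ring] at hneg
  rw [show 2 * (L:ℝ) + 2 * eps + m - 1 + 1 = 2 * L + 2 * eps + ((m + 1 : ℕ) : ℝ) - 1 by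
    push_cast; ring] at htop
  simp only [ecoef0Term]
  rw [show (1 : ℝ) - ((m + 1 : ℕ) : ℝ) = -m by push_cast; ring]
  set D := pochR (L + 1) j * pochR (L + a + 1) j * pochR (2 * eps + 2) j
  linear_combination
    (pochR (a + 2) j * pochR (2 * L + 2 * eps + m - 1) j * (2 * L + 2 * eps + m - 1 + j) / D) *
      hneg + ((m - j) * pochR (-m) j * pochR (a + 2) j / D) * htop

end ecoef0Term

theorem sum_range_succ_eq_of_telescoping {R : Type*} [CommRing R] {f g G : ℕ → R} {c : R}
    {m : ℕ} (h : ∀ j, f j + c * g j = G (j + 1) - G j) (hg : g m = 0) (hG : G (m + 1) = 0) :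
    ∑ j ∈ range (m + 1), f j = -G 0 - c * ∑ j ∈ range m, g j := by
  have hf : ∀ j, f j = (G (j + 1) - G j) - c * g j := fun j => by rw [← h]; ring
  rw [sum_congr rfl fun j _ => hf j, sum_sub_distrib, sum_range_sub, ← mul_sum,
    sum_range_succ g, hg, hG]
  ring

/-- A Zeilberger certificate for `ecoef0Term` at `m`: with `c = 2L + 2ε + m - 1` and
`G j = num j * ecoef0Term a eps L (m + 1) j / (c + j)`, the identity is
`ecoef0Term a eps L (m + 1) j + coeff * ecoef0Term a eps L m j = G (j + 1) - G j`
divided by `ecoef0Term a eps L (m + 1) j`. -/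
def IsZeilbergerCertificate (a eps : ℝ) (L m : ℕ) (coeff : ℝ) (num : ℝ → ℝ) : Prop :=
  ∀ j : ℕ, coeff * (2 * L + 2 * eps + m - 1) * (m - j) / (m * (2 * L + 2 * eps + m - 1 + j)) + 1 +
      num j / (2 * L + 2 * eps + m - 1 + j) =
    num (j + 1) * ((j - m) * (a + 2 + j)) / ((L + 1 + j) * (L + a + 1 + j) * (2 * eps + 2 + j))

theorem sum_ecoef0Term_succ {a eps : ℝ} {L m : ℕ} (hm : 1 ≤ m)
    (hc : 0 < 2 * (L:ℝ) + 2 * eps + m - 1) {coeff : ℝ} {num : ℝ → ℝ}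
    (hcert : IsZeilbergerCertificate a eps L m coeff num) :
    ∑ j ∈ range (m + 1), ecoef0Term a eps L (m + 1) j =
      -(num 0 / (2 * L + 2 * eps + m - 1)) - coeff * ∑ j ∈ range m, ecoef0Term a eps L m j := by
  set c : ℝ := 2 * L + 2 * eps + m - 1 with hc_def
  set U := ecoef0Term a eps L (m + 1)
  have hcj (j : ℕ) : c + j ≠ 0 := by positivity
  have hm' : (m : ℝ) ≠ 0 := by positivity
  have hlower (j : ℕ) : ecoef0Term a eps L m j = c * (m - j) / (m * (c + j)) * U j := by
    rw [div_mul_eq_mul_div, eq_div_iff (mul_ne_zero hm' (hcj j))]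
    have key := mul_ecoef0Term_eq_mul_ecoef0Term_succ (a := a) (eps := eps) (L := L) (m := m) j
    rw [← hc_def] at key
    linear_combination key
  have hupper (j : ℕ) : num ((j + 1 : ℕ) : ℝ) * U (j + 1) / (c + (j + 1 : ℕ)) =
      num (j + 1) * U j * ((j - m) * (a + 2 + j)) /
        ((L + 1 + j) * (L + a + 1 + j) * (2 * eps + 2 + j)) := by
    have := hcj (j + 1)
    simp only [U, ecoef0Term_succ_right]
    push_cast at this ⊢
    field_simp
    ring
  have hG0 : num 0 / c = num ((0 : ℕ) : ℝ) * U 0 / (c + (0 : ℕ)) := by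
    simp [U, ecoef0Term_zero]
  rw [hG0]
  refine sum_range_succ_eq_of_telescoping (G := fun j => num j * U j / (c + j)) (fun j => ?_)
    (ecoef0Term_self hm) (by simp [U, ecoef0Term_self (Nat.le_add_left 1 m)])
  have hj := hcert j
  rw [← hc_def] at hj
  simp only [hupper, hlower]
  linear_combination U j * hj

theorem sum_ecoef0Term_eq_of_certificates {a eps : ℝ} {L : ℕ} (hc : 0 < 2 * (L:ℝ) + 2 * eps)
    {coeff : ℕ → ℝ} {num : ℕ → ℝ → ℝ} {F : ℕ → ℝ}
    (hcert : ∀ m, 1 ≤ m → IsZeilbergerCertificate a eps L m (coeff m) (num m))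
    (hF_one : F 1 = 1)
    (hF_succ : ∀ m, 1 ≤ m → F (m + 1) = -(num m 0 / (2 * L + 2 * eps + m - 1)) - coeff m * F m)
    {m : ℕ} (hm : 1 ≤ m) :
    ∑ j ∈ range m, ecoef0Term a eps L m j = F m := by
  induction m, hm using Nat.le_induction with
  | base => simp [ecoef0Term_zero, hF_one]
  | succ m hm ih =>
    have hc' : 0 < 2 * (L:ℝ) + 2 * eps + m - 1 := by
      have : (1 : ℝ) ≤ m := by exact_mod_cast hm
      linarith
    rw [sum_ecoef0Term_succ hm hc' (hcert m hm), ih, hF_succ m hm]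

namespace TypeC

noncomputable def coeff (L m : ℕ) : ℝ :=
  -(m * (m + L + 1) * (m + 2 * L - 2)) / ((m + 3) * (m + L) * (m + 2 * L + 1))

noncomputable def num (L m : ℕ) (x : ℝ) : ℝ :=
  -(3 * L * (2 * L + 1) + (2 * L ^ 2 + 13 * L + 3) * x + (4 * L + 7) * x ^ 2 + 2 * x ^ 3) /
    ((m + 3) * (m + L))

lemma isZeilbergerCertificate {L m : ℕ} (hL : 1 ≤ L) (hm : 1 ≤ m) :
    IsZeilbergerCertificate (1/2) 1 L m (coeff L m) (num L m) := by
  intro j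
  have : (1 : ℝ) ≤ L := by exact_mod_cast hL
  have : (1 : ℝ) ≤ m := by exact_mod_cast hm
  have : (0 : ℝ) ≤ j := j.cast_nonneg
  unfold coeff num
  field_simp (disch := first | positivity | linarith | exact ne_of_gt (by linarith))
  ring

theorem Ecoef0_eq {L m : ℕ} (hL : 1 ≤ L) (hm : 1 ≤ m) :
    Ecoef0 (1/2) 1 L m = -(2 * ((m:ℝ) + 4 * L - 3) * (L + m) /
      ((2 * L + m) * (2 * L + m - 1) * (2 * L + m - 2))) := by
  have : (1 : ℝ) ≤ L := by exact_mod_cast hL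
  have : (1 : ℝ) ≤ m := by exact_mod_cast hm
  rw [Ecoef0_eq_mul_sum, sum_ecoef0Term_eq_of_certificates (by positivity)
    (fun m hm => isZeilbergerCertificate hL hm)
    (F := fun m => L * (2 * L + 1) * (m + 4 * L - 3) / ((2 * L + m) * (2 * L + m - 1) * (2 * L + m - 2)))
    ?_ ?_ hm]
  · field_simp (disch := first | positivity | linarith | exact ne_of_gt (by linarith))
    ring
  · push_cast
    field_simp (disch := first | positivity | linarith | exact ne_of_gt (by linarith))
    ring
  · intro m hm
    have : (1 : ℝ) ≤ m := by exact_mod_cast hm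
    unfold coeff num
    push_cast
    field_simp (disch := first | positivity | linarith | exact ne_of_gt (by linarith))
    ring

end TypeC

namespace TypeB

noncomputable def coeff (L m : ℕ) : ℝ :=
  -(m * (2 * m + 2 * L - 1) * (m + 2 * L - 2)) / ((m + 2) * (2 * m + 2 * L + 1) * (m + 2 * L))

noncomputable def num (L m : ℕ) (x : ℝ) : ℝ :=
  -(2 * (2 * L * (2 * L + 1) + (2 * L ^ 2 + 9 * L + 2) * x + (4 * L + 5) * x ^ 2 + 2 * x ^ 3)) /
    ((m + 2) * (2 * m + 2 * L + 1))

lemma isZeilbergerCertificate {L m : ℕ} (hL : 1 ≤ L) (hm : 1 ≤ m) :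
    IsZeilbergerCertificate (1/2) (1/2) L m (coeff L m) (num L m) := by
  intro j
  have : (1 : ℝ) ≤ L := by exact_mod_cast hL
  have : (1 : ℝ) ≤ m := by exact_mod_cast hm
  have : (0 : ℝ) ≤ j := j.cast_nonneg
  unfold coeff num
  field_simp (disch := first | positivity | linarith | exact ne_of_gt (by linarith))
  ring

theorem Ecoef0_eq {L m : ℕ} (hL : 1 ≤ L) (hm : 1 ≤ m) :
    Ecoef0 (1/2) (1/2) L m = -((2 * (m:ℝ) + 6 * L - 5) / ((2 * L + m - 1) * (2 * L + m - 2))) := by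
  have : (1 : ℝ) ≤ L := by exact_mod_cast hL
  have : (1 : ℝ) ≤ m := by exact_mod_cast hm
  rw [Ecoef0_eq_mul_sum, sum_ecoef0Term_eq_of_certificates (by positivity)
    (fun m hm => isZeilbergerCertificate hL hm)
    (F := fun m => 2 * L * (2 * L + 1) * (2 * m + 6 * L - 5) /
      (3 * (2 * L + m - 1) * (2 * L + m - 2) * (2 * L + 2 * m - 1)))
    ?_ ?_ hm]
  · field_simp (disch := first | positivity | linarith | exact ne_of_gt (by linarith))
    ring
  · push_cast
    field_simp (disch := first | positivity | linarith | exact ne_of_gt (by linarith))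
    ring
  · intro m hm
    have : (1 : ℝ) ≤ m := by exact_mod_cast hm
    unfold coeff num
    push_cast
    field_simp (disch := first | positivity | linarith | exact ne_of_gt (by linarith))
    ring

end TypeB

namespace TypeD

noncomputable def coeff (L m : ℕ) : ℝ :=
  -(m * (m + L - 1) * (m + 2 * L - 2)) / ((m + 1) * (m + L) * (m + 2 * L - 1))

noncomputable def num (L m : ℕ) (x : ℝ) : ℝ :=
  -(L * (2 * L - 1) + (2 * L ^ 2 + 3 * L - 1) * x + (4 * L + 1) * x ^ 2 + 2 * x ^ 3) /
    ((m + 1) * (m + L))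

lemma isZeilbergerCertificate {L m : ℕ} (hL : 1 ≤ L) (hm : 1 ≤ m) :
    IsZeilbergerCertificate (-1/2) 0 L m (coeff L m) (num L m) := by
  intro j
  have : (1 : ℝ) ≤ L := by exact_mod_cast hL
  have : (1 : ℝ) ≤ m := by exact_mod_cast hm
  have : (0 : ℝ) ≤ j := j.cast_nonneg
  unfold coeff num
  field_simp (disch := first | positivity | linarith | exact ne_of_gt (by linarith))
  ring

theorem Ecoef0_eq {L m : ℕ} (hL : 1 ≤ L) (hm : 1 ≤ m) :
    Ecoef0 (-1/2) 0 L m = -(2 / (2 * (L:ℝ) + m - 2)) := by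
  have : (1 : ℝ) ≤ L := by exact_mod_cast hL
  have : (1 : ℝ) ≤ m := by exact_mod_cast hm
  rw [Ecoef0_eq_mul_sum, sum_ecoef0Term_eq_of_certificates (by positivity)
    (fun m hm => isZeilbergerCertificate hL hm)
    (F := fun m => L * (2 * L - 1) / ((L + m - 1) * (2 * L + m - 2)))
    ?_ ?_ hm]
  · field_simp (disch := first | positivity | linarith | exact ne_of_gt (by linarith))
    ring
  · push_cast
    field_simp (disch := first | positivity | linarith | exact ne_of_gt (by linarith))
    ring
  · intro m hm
    have : (1 : ℝ) ≤ m := by exact_mod_cast hm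
    unfold coeff num
    push_cast
    field_simp (disch := first | positivity | linarith | exact ne_of_gt (by linarith))
    ring

end TypeD

/-- **Elementary closed forms of the transition coefficients `E(m,0)`, `m ≥ 1`, in the
three distinguished cases C, B, D** (Theorem 7.1(ii) of the paper). -/
theorem Ecoef0_closed_forms (L m : ℕ) (hL : 2 ≤ L) (hm : 1 ≤ m) :
    Ecoef0 (1/2) 1 L m
      = -(2 * ((m:ℝ) + 4*(L:ℝ) - 3) * ((L:ℝ) + (m:ℝ)) /
          ((2*(L:ℝ) + (m:ℝ)) * (2*(L:ℝ) + (m:ℝ) - 1) * (2*(L:ℝ) + (m:ℝ) - 2))) ∧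
    Ecoef0 (1/2) (1/2) L m
      = -((2*(m:ℝ) + 6*(L:ℝ) - 5) / ((2*(L:ℝ) + (m:ℝ) - 1) * (2*(L:ℝ) + (m:ℝ) - 2))) ∧
    Ecoef0 (-1/2) 0 L m
      = -(2 / (2*(L:ℝ) + (m:ℝ) - 2)) :=
  have hL₁ : 1 ≤ L := by omega
  ⟨TypeC.Ecoef0_eq hL₁ hm, TypeB.Ecoef0_eq hL₁ hm, TypeD.Ecoef0_eq hL₁ hm⟩
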